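/- Let (Λ,d) be a k-graph satisfying the standing assumption (★). For all x,y ∈ Λ^Δ with x(0) = y(0) there exists a unique element z ∈ Λ^Δ such that z(m,n) = x(m,n) whenever m ≤ n ≤ 0 and z(m,n) = y(m,n) whenever 0 ≤ m ≤ n; moreover F_x ∩ E_y = {z}. -/

import Mathlib

open scoped Classical
open TopologicalSpace MeasureTheory

/-- A `k`-graph: a countable small category with a degree functor to `ℕ^k`
satisfying the unique factorisation property.  Objects are identified with
the degree-zero morphisms. -/
structure KGraph (k : ℕ) where
  Mor : Type
  countable : Countable Mor
  src : Mor → Mor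
  rng : Mor → Mor
  deg : Mor → Fin k → ℕ
  comp : (lam mu : Mor) → src lam = rng mu → Mor
  deg_src : ∀ lam, deg (src lam) = 0
  deg_rng : ∀ lam, deg (rng lam) = 0
  src_obj : ∀ v, deg v = 0 → src v = v
  rng_obj : ∀ v, deg v = 0 → rng v = v
  src_comp : ∀ lam mu h, src (comp lam mu h) = src mu
  rng_comp : ∀ lam mu h, rng (comp lam mu h) = rng lam
  deg_comp : ∀ lam mu h, deg (comp lam mu h) = deg lam + deg mu
  id_comp : ∀ lam (h : src (rng lam) = rng lam), comp (rng lam) lam h = lam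
  comp_id : ∀ lam (h : src lam = rng (src lam)), comp lam (src lam) h = lam
  assoc : ∀ l m n (h1 : src l = rng m) (h2 : src m = rng n)
      (h3 : src (comp l m h1) = rng n) (h4 : src l = rng (comp m n h2)),
      comp (comp l m h1) n h3 = comp l (comp m n h2) h4
  factor : ∀ lam (n1 n2 : Fin k → ℕ), deg lam = n1 + n2 →
      ∃! p : Mor × Mor, deg p.1 = n1 ∧ deg p.2 = n2 ∧
        ∃ h : src p.1 = rng p.2, comp p.1 p.2 h = lam

namespace KGraph

variable {k : ℕ}

/-- The vertices (objects) of a `k`-graph are the degree-zero morphisms. -/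
def IsVertex (Λ : KGraph k) (v : Λ.Mor) : Prop := Λ.deg v = 0

/-- Standing assumption (★): for each `p ∈ ℕ^k` the restrictions of `r` and `s`
to `Λ^p` are surjective (onto the vertices) and finite-to-one. -/
def Star (Λ : KGraph k) : Prop :=
  ∀ p : Fin k → ℕ,
    (∀ v, Λ.IsVertex v →
      (∃ lam, Λ.deg lam = p ∧ Λ.rng lam = v) ∧
      (∃ lam, Λ.deg lam = p ∧ Λ.src lam = v)) ∧
    (∀ v, Λ.IsVertex v →
      {lam | Λ.deg lam = p ∧ Λ.rng lam = v}.Finite ∧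
      {lam | Λ.deg lam = p ∧ Λ.src lam = v}.Finite)

/-- Irreducibility (strong connectedness) of a `k`-graph. -/
def Irreducible (Λ : KGraph k) : Prop :=
  ∀ u v, Λ.IsVertex u → Λ.IsVertex v →
    ∃ lam, Λ.deg lam ≠ 0 ∧ Λ.rng lam = u ∧ Λ.src lam = v

/-- Primitivity of a `k`-graph. -/
def Primitive (Λ : KGraph k) : Prop :=
  ∃ p : Fin k → ℕ, p ≠ 0 ∧ ∀ u v, Λ.IsVertex u → Λ.IsVertex v →
    ∃ lam, Λ.deg lam = p ∧ Λ.rng lam = u ∧ Λ.src lam = v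

/-- The degree of a morphism, viewed in `ℤ^k`. -/
def degZ (Λ : KGraph k) (lam : Λ.Mor) : Fin k → ℤ := fun i => (Λ.deg lam i : ℤ)

/-- The number of morphisms of degree `p` with range `u` and source `v`. -/
noncomputable def count (Λ : KGraph k) (p : Fin k → ℕ) (u v : Λ.Mor) : ℕ :=
  Nat.card {lam : Λ.Mor // Λ.deg lam = p ∧ Λ.rng lam = u ∧ Λ.src lam = v}

end KGraph

/-- A two-sided infinite path in a `k`-graph: a degree-preserving functor from
the `k`-graph `Δ = {(m,n) ∈ ℤ^k × ℤ^k : m ≤ n}` to `Λ`. -/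
structure TwoSidedPath {k : ℕ} (Λ : KGraph k) where
  toFun : ∀ m n : Fin k → ℤ, m ≤ n → Λ.Mor
  deg_eq : ∀ m n (h : m ≤ n) (i : Fin k), (Λ.deg (toFun m n h) i : ℤ) = n i - m i
  src_eq : ∀ m n (h : m ≤ n), Λ.src (toFun m n h) = toFun n n le_rfl
  rng_eq : ∀ m n (h : m ≤ n), Λ.rng (toFun m n h) = toFun m m le_rfl
  comp_eq : ∀ l m n (h1 : l ≤ m) (h2 : m ≤ n),
      Λ.comp (toFun l m h1) (toFun m n h2)
        ((src_eq l m h1).trans (rng_eq m n h2).symm) = toFun l n (h1.trans h2)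

/-- A one-sided infinite path in a `k`-graph: a degree-preserving functor from
the `k`-graph `Ω = {(m,n) ∈ ℕ^k × ℕ^k : m ≤ n}` to `Λ`. -/
structure OneSidedPath {k : ℕ} (Λ : KGraph k) where
  toFun : ∀ m n : Fin k → ℕ, m ≤ n → Λ.Mor
  deg_eq : ∀ m n (h : m ≤ n) (i : Fin k), Λ.deg (toFun m n h) i = n i - m i
  src_eq : ∀ m n (h : m ≤ n), Λ.src (toFun m n h) = toFun n n le_rfl
  rng_eq : ∀ m n (h : m ≤ n), Λ.rng (toFun m n h) = toFun m m le_rfl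
  comp_eq : ∀ l m n (h1 : l ≤ m) (h2 : m ≤ n),
      Λ.comp (toFun l m h1) (toFun m n h2)
        ((src_eq l m h1).trans (rng_eq m n h2).symm) = toFun l n (h1.trans h2)

namespace TwoSidedPath

variable {k : ℕ} {Λ : KGraph k}

theorem toFun_congr (x : TwoSidedPath Λ) {m n m' n' : Fin k → ℤ}
    (hm : m = m') (hn : n = n') (h : m ≤ n) (h' : m' ≤ n') :
    x.toFun m n h = x.toFun m' n' h' := by subst hm; subst hn; rfl

/-- The vertex `x(0)` of a two-sided path. -/
def obj0 (x : TwoSidedPath Λ) : Λ.Mor := x.toFun 0 0 le_rfl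

end TwoSidedPath

theorem le_add_degZ {k : ℕ} (Λ : KGraph k) (n : Fin k → ℤ) (lam : Λ.Mor) :
    n ≤ n + Λ.degZ lam :=
  Pi.le_def.mpr fun i => by
    show n i ≤ n i + (Λ.deg lam i : ℤ); omega

/-- The cylinder set `Z(λ, n) = {x ∈ Λ^Δ : x(n, n + d(λ)) = λ}`. -/
def ZCyl {k : ℕ} (Λ : KGraph k) (lam : Λ.Mor) (n : Fin k → ℤ) :
    Set (TwoSidedPath Λ) :=
  {x | x.toFun n (n + Λ.degZ lam) (le_add_degZ Λ n lam) = lam}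

/-- The topology on `Λ^Δ` generated by the cylinder sets. -/
instance {k : ℕ} (Λ : KGraph k) : TopologicalSpace (TwoSidedPath Λ) :=
  TopologicalSpace.generateFrom {S | ∃ lam n, S = ZCyl Λ lam n}

noncomputable instance {k : ℕ} (Λ : KGraph k) : MeasurableSpace (TwoSidedPath Λ) :=
  borel _

/-- The one-sided cylinder set `Z(λ) = {x ∈ Λ^Ω : x(0, d(λ)) = λ}`. -/
def OCyl {k : ℕ} (Λ : KGraph k) (lam : Λ.Mor) : Set (OneSidedPath Λ) :=
  {x | x.toFun 0 (Λ.deg lam) (Pi.le_def.mpr fun _ => Nat.zero_le _) = lam}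

/-- The topology on `Λ^Ω` generated by the cylinder sets. -/
instance {k : ℕ} (Λ : KGraph k) : TopologicalSpace (OneSidedPath Λ) :=
  TopologicalSpace.generateFrom {S | ∃ lam, S = OCyl Λ lam}

/-- The shift `σ^n` on the two-sided path space, for `n ∈ ℤ^k`. -/
def TwoSidedPath.shift {k : ℕ} {Λ : KGraph k} (n : Fin k → ℤ)
    (x : TwoSidedPath Λ) : TwoSidedPath Λ where
  toFun l m h := x.toFun (l + n) (m + n) (add_le_add_left h n)
  deg_eq l m h i := by
    show (Λ.deg (x.toFun (l + n) (m + n) (add_le_add_left h n)) i : ℤ) = m i - l i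
    have h' := x.deg_eq (l + n) (m + n) (add_le_add_left h n) i
    simp only [Pi.add_apply] at h'
    omega
  src_eq l m h := x.src_eq (l + n) (m + n) (add_le_add_left h n)
  rng_eq l m h := x.rng_eq (l + n) (m + n) (add_le_add_left h n)
  comp_eq l m m' h1 h2 :=
    x.comp_eq (l + n) (m + n) (m' + n) (add_le_add_left h1 n) (add_le_add_left h2 n)

/-- The shift `σ^p` on the one-sided path space, for `p ∈ ℕ^k`. -/
def OneSidedPath.shift {k : ℕ} {Λ : KGraph k} (p : Fin k → ℕ)
    (x : OneSidedPath Λ) : OneSidedPath Λ where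
  toFun l m h := x.toFun (l + p) (m + p) (add_le_add_left h p)
  deg_eq l m h i := by
    show Λ.deg (x.toFun (l + p) (m + p) (add_le_add_left h p)) i = m i - l i
    have h' := x.deg_eq (l + p) (m + p) (add_le_add_left h p) i
    simp only [Pi.add_apply] at h'
    omega
  src_eq l m h := x.src_eq (l + p) (m + p) (add_le_add_left h p)
  rng_eq l m h := x.rng_eq (l + p) (m + p) (add_le_add_left h p)
  comp_eq l m m' h1 h2 :=
    x.comp_eq (l + p) (m + p) (m' + p) (add_le_add_left h1 p) (add_le_add_left h2 p)

/-- The vector `(j, …, j) ∈ ℤ^k`, i.e. `j·e` where `e = (1,…,1)`. -/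
def jvecZ (k : ℕ) (j : ℕ) : Fin k → ℤ := fun _ => (j : ℤ)

theorem neg_jvecZ_le (k j : ℕ) : -(jvecZ k j) ≤ jvecZ k j :=
  Pi.le_def.mpr fun _ => by show -((j : ℤ)) ≤ (j : ℤ); omega

/-- Coercion `ℕ^k → ℤ^k`. -/
def coeZ {k : ℕ} (p : Fin k → ℕ) : Fin k → ℤ := fun i => (p i : ℤ)

theorem coeZ_le_coeZ {k : ℕ} {m n : Fin k → ℕ} (h : m ≤ n) : coeZ m ≤ coeZ n :=
  Pi.le_def.mpr fun i => by
    show ((m i : ℤ)) ≤ (n i : ℤ)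
    exact_mod_cast Pi.le_def.mp h i

theorem neg_coeZ_le {k : ℕ} (m : Fin k → ℕ) : -(coeZ m) ≤ coeZ m :=
  Pi.le_def.mpr fun i => by show -((m i : ℤ)) ≤ (m i : ℤ); omega

/-- The quantity `h(x,y) ∈ ℕ∞`:  `0` if `x(0) ≠ y(0)`, and otherwise
`1 + sup { j : x(-je, je) = y(-je, je) }`. -/
noncomputable def hdist {k : ℕ} {Λ : KGraph k} (x y : TwoSidedPath Λ) : ℕ∞ :=
  if x.obj0 = y.obj0 then
    1 + sSup {c : ℕ∞ | ∃ j : ℕ, c = (j : ℕ∞) ∧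
        x.toFun (-(jvecZ k j)) (jvecZ k j) (neg_jvecZ_le k j) =
        y.toFun (-(jvecZ k j)) (jvecZ k j) (neg_jvecZ_le k j)}
  else 0

/-- The metric `ρ(x,y) = r^{h(x,y)}`, with `r^∞ = 0`. -/
noncomputable def rho {k : ℕ} {Λ : KGraph k} (r : ℝ) (x y : TwoSidedPath Λ) : ℝ :=
  if hdist x y = ⊤ then 0 else r ^ (hdist x y).toNat

/-- The local contracting set `E_x`. -/
def Ex {k : ℕ} {Λ : KGraph k} (x : TwoSidedPath Λ) : Set (TwoSidedPath Λ) :=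
  {y | ∀ m n (h : m ≤ n), 0 ≤ m → y.toFun m n h = x.toFun m n h}

/-- The local expanding set `F_x`. -/
def Fx {k : ℕ} {Λ : KGraph k} (x : TwoSidedPath Λ) : Set (TwoSidedPath Λ) :=
  {y | ∀ m n (h : m ≤ n), n ≤ 0 → y.toFun m n h = x.toFun m n h}

/-- The restriction map `π : Λ^Δ → Λ^Ω`. -/
def TwoSidedPath.restrict {k : ℕ} {Λ : KGraph k} (x : TwoSidedPath Λ) :
    OneSidedPath Λ where
  toFun m n h := x.toFun (coeZ m) (coeZ n) (coeZ_le_coeZ h)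
  deg_eq m n h i := by
    show Λ.deg (x.toFun (coeZ m) (coeZ n) (coeZ_le_coeZ h)) i = n i - m i
    have h' := x.deg_eq (coeZ m) (coeZ n) (coeZ_le_coeZ h) i
    simp only [coeZ] at h'
    omega
  src_eq m n h := x.src_eq (coeZ m) (coeZ n) (coeZ_le_coeZ h)
  rng_eq m n h := x.rng_eq (coeZ m) (coeZ n) (coeZ_le_coeZ h)
  comp_eq l m n h1 h2 :=
    x.comp_eq (coeZ l) (coeZ m) (coeZ n) (coeZ_le_coeZ h1) (coeZ_le_coeZ h2)

/-- Stable equivalence: `x ∼ₛ y` iff the two paths eventually agree to the right. -/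
def SRel {k : ℕ} {Λ : KGraph k} (x y : TwoSidedPath Λ) : Prop :=
  ∃ m : Fin k → ℤ, ∀ n (h : m ≤ n), x.toFun m n h = y.toFun m n h

/-- Unstable equivalence: `x ∼ᵤ y` iff the two paths eventually agree to the left. -/
def URel {k : ℕ} {Λ : KGraph k} (x y : TwoSidedPath Λ) : Prop :=
  ∃ n : Fin k → ℤ, ∀ m (h : m ≤ n), x.toFun m n h = y.toFun m n h

/-- Asymptotic equivalence: `x ∼ₐ y` iff `x ∼ₛ y` and `x ∼ᵤ y`. -/
def ARel {k : ℕ} {Λ : KGraph k} (x y : TwoSidedPath Λ) : Prop :=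
  ∃ m : Fin k → ℕ, ∀ n : Fin k → ℤ, coeZ m ≤ n →
    (∀ h : coeZ m ≤ n, x.toFun (coeZ m) n h = y.toFun (coeZ m) n h) ∧
    (∀ h' : -n ≤ -(coeZ m), x.toFun (-n) (-(coeZ m)) h' = y.toFun (-n) (-(coeZ m)) h')

/-- The groupoid `G_{s,m}` of pairs agreeing from `m ∈ ℤ^k` onwards. -/
def Gsm {k : ℕ} (Λ : KGraph k) (m : Fin k → ℤ) :
    Set (TwoSidedPath Λ × TwoSidedPath Λ) :=
  {p | ∀ n (h : m ≤ n), p.1.toFun m n h = p.2.toFun m n h}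

theorem TwoSidedPath.self_mem_cyl {k : ℕ} {Λ : KGraph k} (x : TwoSidedPath Λ)
    (m n : Fin k → ℤ) (h : m ≤ n) : x ∈ ZCyl Λ (x.toFun m n h) m := by
  show x.toFun m (m + Λ.degZ (x.toFun m n h)) _ = x.toFun m n h
  apply x.toFun_congr rfl
  funext i
  show m i + (Λ.deg (x.toFun m n h) i : ℤ) = n i
  have h' := x.deg_eq m n h i
  omega

theorem degZ_obj0 {k : ℕ} {Λ : KGraph k} (x : TwoSidedPath Λ) :
    Λ.degZ x.obj0 = 0 := by
  funext i
  show (Λ.deg (x.toFun 0 0 le_rfl) i : ℤ) = 0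
  have h' := x.deg_eq 0 0 le_rfl i
  simp only [Pi.zero_apply] at h'
  omega

theorem mem_vertex_cyl {k : ℕ} {Λ : KGraph k} {x z : TwoSidedPath Λ}
    (hz : z ∈ ZCyl Λ x.obj0 0) : z.obj0 = x.obj0 := by
  have h0 : (0 : Fin k → ℤ) = 0 + Λ.degZ x.obj0 := by rw [degZ_obj0]; simp
  calc z.obj0 = z.toFun 0 (0 + Λ.degZ x.obj0) (le_add_degZ Λ 0 x.obj0) :=
        z.toFun_congr rfl h0 le_rfl (le_add_degZ Λ 0 x.obj0)
    _ = x.obj0 := hz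

/-!
The bracket `z = [x, y]` is read off the single morphism `x(a, 0) · y(0, b)` for any window
`a ≤ m ∧ 0` and `n ∨ 0 ≤ b`: by unique factorisation it has exactly one factor of degree `n - m`
starting at degree `m - a`, and this is `z(m, n)`. Factors of factors are factors, so the choice
of window does not matter; consecutive factors compose to the factor of their union, so `z` is a
functor. Any `z' ∈ F_x ∩ E_y` has `z'(a, b) = x(a, 0) · y(0, b)`, hence the same factors.
-/

namespace KGraph

variable {k : ℕ} {Λ : KGraph k} {a b c ab bc w : Λ.Mor}

/-- The relational form of `a · b = c`, which does not carry the proof of `s(a) = r(b)`. -/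
def IsComp (Λ : KGraph k) (a b c : Λ.Mor) : Prop :=
  ∃ h : Λ.src a = Λ.rng b, Λ.comp a b h = c

theorem isComp_comp (h : Λ.src a = Λ.rng b) : Λ.IsComp a b (Λ.comp a b h) := ⟨h, rfl⟩

namespace IsComp

theorem src_eq_rng (h : Λ.IsComp a b c) : Λ.src a = Λ.rng b := h.1

theorem deg_eq (h : Λ.IsComp a b c) : Λ.deg c = Λ.deg a + Λ.deg b := by
  obtain ⟨h, rfl⟩ := h
  exact Λ.deg_comp a b h

theorem eq (h : Λ.IsComp a b c) (h' : Λ.IsComp a b w) : c = w := by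
  obtain ⟨_, rfl⟩ := h
  obtain ⟨_, rfl⟩ := h'
  rfl

theorem src_eq_of_deg_eq_zero (h : Λ.IsComp a b c) (hb : Λ.deg b = 0) : Λ.src a = b :=
  h.src_eq_rng.trans (Λ.rng_obj b hb)

theorem rng_eq_of_deg_eq_zero (h : Λ.IsComp a b c) (ha : Λ.deg a = 0) : Λ.rng b = a :=
  h.src_eq_rng.symm.trans (Λ.src_obj a ha)

theorem unique_factor {a' b' : Λ.Mor} (h : Λ.IsComp a b c) (h' : Λ.IsComp a' b' c)
    (hdeg : Λ.deg a = Λ.deg a') : a = a' ∧ b = b' := by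
  have hdeg' : Λ.deg b = Λ.deg b' :=
    add_left_cancel (h.deg_eq.symm.trans (h'.deg_eq.trans (congrArg (· + _) hdeg.symm)))
  obtain ⟨hab, rfl⟩ := h
  obtain ⟨hab', hc⟩ := h'
  have := (Λ.factor _ _ _ (Λ.deg_comp a b hab)).unique (y₁ := (a', b')) (y₂ := (a, b))
    ⟨hdeg.symm, hdeg'.symm, hab', hc⟩ ⟨rfl, rfl, hab, rfl⟩
  exact ⟨(congrArg Prod.fst this).symm, (congrArg Prod.snd this).symm⟩

theorem assoc_right (hab : Λ.IsComp a b ab) (h : Λ.IsComp ab c w) :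
    ∃ bc, Λ.IsComp b c bc ∧ Λ.IsComp a bc w := by
  obtain ⟨hab, rfl⟩ := hab
  obtain ⟨h, rfl⟩ := h
  have hbc : Λ.src b = Λ.rng c := (Λ.src_comp a b hab).symm.trans h
  have habc : Λ.src a = Λ.rng (Λ.comp b c hbc) := hab.trans (Λ.rng_comp b c hbc).symm
  exact ⟨_, isComp_comp hbc, habc, (Λ.assoc a b c hab hbc h habc).symm⟩

theorem assoc_left (hbc : Λ.IsComp b c bc) (h : Λ.IsComp a bc w) :
    ∃ ab, Λ.IsComp a b ab ∧ Λ.IsComp ab c w := by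
  obtain ⟨hbc, rfl⟩ := hbc
  obtain ⟨h, rfl⟩ := h
  have hab : Λ.src a = Λ.rng b := h.trans (Λ.rng_comp b c hbc)
  have habc : Λ.src (Λ.comp a b hab) = Λ.rng c := (Λ.src_comp a b hab).trans hbc
  exact ⟨_, isComp_comp hab, habc, Λ.assoc a b c hab hbc habc h⟩

end IsComp

theorem exists_isComp_of_deg_eq {n₁ n₂ : Fin k → ℕ} (h : Λ.deg c = n₁ + n₂) :
    ∃ a b, Λ.deg a = n₁ ∧ Λ.deg b = n₂ ∧ Λ.IsComp a b c := by
  obtain ⟨⟨a, b⟩, ⟨ha, hb, hab⟩, -⟩ := Λ.factor c n₁ n₂ h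
  exact ⟨a, b, ha, hb, hab⟩

def IsSegment (Λ : KGraph k) (w : Λ.Mor) (p : Fin k → ℕ) (g : Λ.Mor) : Prop :=
  ∃ α γ gγ, Λ.deg α = p ∧ Λ.IsComp g γ gγ ∧ Λ.IsComp α gγ w

variable {p q r : Fin k → ℕ} {g g' : Λ.Mor}

theorem exists_isSegment (hw : Λ.deg w = p + q + r) : ∃ g, Λ.deg g = q ∧ Λ.IsSegment w p g := by
  obtain ⟨α, gγ, hα, hgγ, hw⟩ := exists_isComp_of_deg_eq (hw.trans (add_assoc p q r))
  obtain ⟨g, γ, hg, -, hg'⟩ := exists_isComp_of_deg_eq hgγ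
  exact ⟨g, hg, α, γ, gγ, hα, hg', hw⟩

namespace IsSegment

theorem eq (h : Λ.IsSegment w p g) (h' : Λ.IsSegment w p g') (hdeg : Λ.deg g = Λ.deg g') :
    g = g' := by
  obtain ⟨α, γ, gγ, hα, hgγ, hw⟩ := h
  obtain ⟨α', γ', gγ', hα', hgγ', hw'⟩ := h'
  obtain ⟨-, rfl⟩ := hw.unique_factor hw' (hα.trans hα'.symm)
  exact (hgγ.unique_factor hgγ' hdeg).1

theorem trans {w' : Λ.Mor} (hw : Λ.IsSegment w' p w) (hg : Λ.IsSegment w q g) :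
    Λ.IsSegment w' (p + q) g := by
  obtain ⟨α, γ, wγ, hα, hwγ, hw'⟩ := hw
  obtain ⟨α', γ', gγ', hα', hgγ', hw⟩ := hg
  obtain ⟨t, hgγ't, hα't⟩ := hw.assoc_right hwγ
  obtain ⟨s, hγ's, hgs⟩ := hgγ'.assoc_right hgγ't
  obtain ⟨u, hαα', hut⟩ := hα't.assoc_left hw'
  exact ⟨u, s, t, by rw [hαα'.deg_eq, hα, hα'], hgs, hut⟩

theorem exists_isComp (hg : Λ.IsSegment w p g) (hg' : Λ.IsSegment w (p + Λ.deg g) g') :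
    ∃ gg', Λ.IsComp g g' gg' ∧ Λ.IsSegment w p gg' := by
  obtain ⟨α, γ, gγ, hα, hgγ, hw⟩ := hg
  obtain ⟨α', γ', g'γ', hα', hg'γ', hw'⟩ := hg'
  obtain ⟨αg, hαg, hαgγ⟩ := hgγ.assoc_left hw
  obtain ⟨-, rfl⟩ := hαgγ.unique_factor hw' (by rw [hαg.deg_eq, hα, hα'])
  obtain ⟨gg', hgg', hgg'γ'⟩ := hg'γ'.assoc_left hgγ
  exact ⟨gg', hgg', α, γ', gγ, hα, hgg'γ', hw⟩

end IsSegment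

end KGraph

def intervalDeg {k : ℕ} (m n : Fin k → ℤ) : Fin k → ℕ := fun i => (n i - m i).toNat

section intervalDeg

variable {k : ℕ} {l m n : Fin k → ℤ}

theorem intervalDeg_self (n : Fin k → ℤ) : intervalDeg n n = 0 := by
  funext i
  simp [intervalDeg]

theorem intervalDeg_add (h₁ : l ≤ m) (h₂ : m ≤ n) :
    intervalDeg l m + intervalDeg m n = intervalDeg l n := by
  funext i
  have h₁i : l i ≤ m i := h₁ i
  have h₂i : m i ≤ n i := h₂ i
  simp only [intervalDeg, Pi.add_apply]
  omega

end intervalDeg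

namespace TwoSidedPath

variable {k : ℕ} {Λ : KGraph k}

theorem deg_toFun (x : TwoSidedPath Λ) {m n : Fin k → ℤ} (h : m ≤ n) :
    Λ.deg (x.toFun m n h) = intervalDeg m n := by
  funext i
  have := x.deg_eq m n h i
  simp only [intervalDeg]
  omega

theorem isComp (x : TwoSidedPath Λ) {l m n : Fin k → ℤ} (h₁ : l ≤ m) (h₂ : m ≤ n) :
    Λ.IsComp (x.toFun l m h₁) (x.toFun m n h₂) (x.toFun l n (h₁.trans h₂)) :=
  ⟨_, x.comp_eq l m n h₁ h₂⟩

theorem isSegment (x : TwoSidedPath Λ) {a m n b : Fin k → ℤ} (ha : a ≤ m) (h : m ≤ n)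
    (hb : n ≤ b) :
    Λ.IsSegment (x.toFun a b (ha.trans (h.trans hb))) (intervalDeg a m) (x.toFun m n h) :=
  ⟨_, _, _, x.deg_toFun ha, x.isComp h hb, x.isComp ha (h.trans hb)⟩

@[ext]
theorem ext {x y : TwoSidedPath Λ} (h : ∀ m n (hmn : m ≤ n), x.toFun m n hmn = y.toFun m n hmn) :
    x = y := by
  cases x
  cases y
  congr
  funext m n hmn
  exact h m n hmn

def ofIsComp (f : ∀ m n : Fin k → ℤ, m ≤ n → Λ.Mor)
    (hdeg : ∀ m n (h : m ≤ n), Λ.deg (f m n h) = intervalDeg m n)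
    (hcomp : ∀ l m n (h₁ : l ≤ m) (h₂ : m ≤ n),
      Λ.IsComp (f l m h₁) (f m n h₂) (f l n (h₁.trans h₂))) :
    TwoSidedPath Λ where
  toFun := f
  deg_eq m n h i := by
    rw [hdeg]
    exact Int.toNat_of_nonneg (Int.sub_nonneg.mpr (h i))
  src_eq m n h :=
    (hcomp m n n h le_rfl).src_eq_of_deg_eq_zero (by rw [hdeg, intervalDeg_self])
  rng_eq m n h :=
    (hcomp m m n le_rfl h).rng_eq_of_deg_eq_zero (by rw [hdeg, intervalDeg_self])
  comp_eq l m n h₁ h₂ := (hcomp l m n h₁ h₂).2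

end TwoSidedPath

section Bracket

open KGraph

variable {k : ℕ} {Λ : KGraph k} {x y : TwoSidedPath Λ} (h0 : x.obj0 = y.obj0)
  {a b m n : Fin k → ℤ}

def bracketWindow (ha : a ≤ 0) (hb : 0 ≤ b) : Λ.Mor :=
  Λ.comp (x.toFun a 0 ha) (y.toFun 0 b hb)
    ((x.src_eq a 0 ha).trans (h0.trans (y.rng_eq 0 b hb).symm))

theorem isComp_bracketWindow (ha : a ≤ 0) (hb : 0 ≤ b) :
    Λ.IsComp (x.toFun a 0 ha) (y.toFun 0 b hb) (bracketWindow h0 ha hb) :=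
  isComp_comp _

theorem deg_bracketWindow (ha : a ≤ 0) (hb : 0 ≤ b) :
    Λ.deg (bracketWindow h0 ha hb) = intervalDeg a b := by
  rw [(isComp_bracketWindow h0 ha hb).deg_eq, x.deg_toFun, y.deg_toFun, intervalDeg_add ha hb]

theorem bracketWindow_of_nonpos (ha : a ≤ 0) : bracketWindow h0 ha le_rfl = x.toFun a 0 ha := by
  have hx := x.isComp ha le_rfl
  rw [show x.toFun 0 0 le_rfl = y.toFun 0 0 le_rfl from h0] at hx
  exact (isComp_bracketWindow h0 ha le_rfl).eq hx

theorem bracketWindow_of_nonneg (hb : 0 ≤ b) : bracketWindow h0 le_rfl hb = y.toFun 0 b hb := by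
  have hy := y.isComp le_rfl hb
  rw [show y.toFun 0 0 le_rfl = x.toFun 0 0 le_rfl from h0.symm] at hy
  exact (isComp_bracketWindow h0 le_rfl hb).eq hy

theorem bracketWindow_eq_of_mem {z : TwoSidedPath Λ} (hz : z ∈ Fx x ∩ Ex y) (ha : a ≤ 0)
    (hb : 0 ≤ b) : bracketWindow h0 ha hb = z.toFun a b (ha.trans hb) := by
  have hw := isComp_bracketWindow h0 ha hb
  rw [← hz.1 a 0 ha le_rfl, ← hz.2 0 b hb le_rfl] at hw
  exact hw.eq (z.isComp ha hb)

theorem isSegment_bracketWindow {a' b' : Fin k → ℤ} (ha' : a' ≤ a) (ha : a ≤ 0) (hb : 0 ≤ b)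
    (hb' : b ≤ b') :
    Λ.IsSegment (bracketWindow h0 (ha'.trans ha) (hb.trans hb')) (intervalDeg a' a)
      (bracketWindow h0 ha hb) := by
  obtain ⟨w, hw, hwy⟩ := (y.isComp hb hb').assoc_left (isComp_bracketWindow h0 ha (hb.trans hb'))
  obtain rfl := hw.eq (isComp_bracketWindow h0 ha hb)
  obtain ⟨w', hw', hxw'⟩ :=
    (x.isComp ha' ha).assoc_right (isComp_bracketWindow h0 (ha'.trans ha) (hb.trans hb'))
  obtain rfl := hw'.eq (isComp_bracketWindow h0 ha (hb.trans hb'))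
  exact ⟨_, _, _, x.deg_toFun ha', hwy, hxw'⟩

theorem exists_isSegment_bracketWindow (h : m ≤ n) :
    ∃ g, Λ.deg g = intervalDeg m n ∧
      Λ.IsSegment (bracketWindow h0 (inf_le_right : m ⊓ 0 ≤ 0) (le_sup_right : 0 ≤ n ⊔ 0))
        (intervalDeg (m ⊓ 0) m) g :=
  exists_isSegment (r := intervalDeg n (n ⊔ 0)) <| by
    rw [deg_bracketWindow, intervalDeg_add inf_le_left h,
      intervalDeg_add (inf_le_left.trans h) le_sup_left]

noncomputable def bracketFun (m n : Fin k → ℤ) (h : m ≤ n) : Λ.Mor :=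
  (exists_isSegment_bracketWindow h0 h).choose

theorem deg_bracketFun (h : m ≤ n) : Λ.deg (bracketFun h0 m n h) = intervalDeg m n :=
  (exists_isSegment_bracketWindow h0 h).choose_spec.1

theorem isSegment_bracketFun (h : m ≤ n) (ha : a ≤ m) (ha0 : a ≤ 0) (hb : n ≤ b) (hb0 : 0 ≤ b) :
    Λ.IsSegment (bracketWindow h0 ha0 hb0) (intervalDeg a m) (bracketFun h0 m n h) := by
  have hseg := (isSegment_bracketWindow h0 (le_inf ha ha0) inf_le_right le_sup_right
    (sup_le hb hb0)).trans (exists_isSegment_bracketWindow h0 h).choose_spec.2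
  rwa [intervalDeg_add (le_inf ha ha0) inf_le_left] at hseg

theorem isComp_bracketFun {l : Fin k → ℤ} (h₁ : l ≤ m) (h₂ : m ≤ n) :
    Λ.IsComp (bracketFun h0 l m h₁) (bracketFun h0 m n h₂) (bracketFun h0 l n (h₁.trans h₂)) := by
  have hl := isSegment_bracketFun h0 h₁ inf_le_left (inf_le_right : l ⊓ 0 ≤ 0)
    (h₂.trans le_sup_left) (le_sup_right : 0 ≤ n ⊔ 0)
  have hm := isSegment_bracketFun h0 h₂ (inf_le_left.trans h₁) (inf_le_right : l ⊓ 0 ≤ 0)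
    le_sup_left (le_sup_right : 0 ≤ n ⊔ 0)
  rw [← intervalDeg_add inf_le_left h₁, ← deg_bracketFun h0 h₁] at hm
  obtain ⟨g, hg, hseg⟩ := hl.exists_isComp hm
  have hln := isSegment_bracketFun h0 (h₁.trans h₂) inf_le_left (inf_le_right : l ⊓ 0 ≤ 0)
    le_sup_left (le_sup_right : 0 ≤ n ⊔ 0)
  rwa [hseg.eq hln (by rw [hg.deg_eq, deg_bracketFun, deg_bracketFun, deg_bracketFun,
    intervalDeg_add h₁ h₂])] at hg

noncomputable def bracket : TwoSidedPath Λ :=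
  TwoSidedPath.ofIsComp (bracketFun h0) (fun _ _ h => deg_bracketFun h0 h)
    (fun _ _ _ h₁ h₂ => isComp_bracketFun h0 h₁ h₂)

theorem bracket_mem : bracket h0 ∈ Fx x ∩ Ex y := by
  refine ⟨fun m n h hn => ?_, fun m n h hm => ?_⟩
  · have hseg := isSegment_bracketFun h0 h le_rfl (h.trans hn) hn le_rfl
    rw [bracketWindow_of_nonpos] at hseg
    exact hseg.eq (x.isSegment le_rfl h hn) (by rw [deg_bracketFun, x.deg_toFun])
  · have hseg := isSegment_bracketFun h0 h hm le_rfl le_rfl (hm.trans h)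
    rw [bracketWindow_of_nonneg] at hseg
    exact hseg.eq (y.isSegment hm h le_rfl) (by rw [deg_bracketFun, y.deg_toFun])

theorem eq_bracket_of_mem {z : TwoSidedPath Λ} (hz : z ∈ Fx x ∩ Ex y) : z = bracket h0 := by
  ext m n h
  have hseg := isSegment_bracketFun h0 h inf_le_left (inf_le_right : m ⊓ 0 ≤ 0) le_sup_left
    (le_sup_right : 0 ≤ n ⊔ 0)
  rw [bracketWindow_eq_of_mem h0 hz] at hseg
  exact (z.isSegment inf_le_left h le_sup_left).eq hseg 
    ((z.deg_toFun h).trans (deg_bracketFun h0 h).symm)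

end Bracket

theorem bracket_exists_unique_general {k : ℕ} (Λ : KGraph k)
    (x y : TwoSidedPath Λ) (h0 : x.obj0 = y.obj0) :
    ∃ z : TwoSidedPath Λ,
      ((∀ m n (h : m ≤ n), n ≤ 0 → z.toFun m n h = x.toFun m n h) ∧
       (∀ m n (h : m ≤ n), 0 ≤ m → z.toFun m n h = y.toFun m n h)) ∧
      (∀ z' : TwoSidedPath Λ,
        ((∀ m n (h : m ≤ n), n ≤ 0 → z'.toFun m n h = x.toFun m n h) ∧
         (∀ m n (h : m ≤ n), 0 ≤ m → z'.toFun m n h = y.toFun m n h)) → z' = z) ∧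
      Fx x ∩ Ex y = {z} :=
  ⟨bracket h0, bracket_mem h0, fun _ hz => eq_bracket_of_mem h0 hz,
    Set.eq_singleton_iff_unique_mem.mpr ⟨bracket_mem h0, fun _ hz => eq_bracket_of_mem h0 hz⟩⟩

/-- For `x, y ∈ Λ^Δ` with `x(0) = y(0)` there is a unique
`z ∈ Λ^Δ` agreeing with `x` on `m ≤ n ≤ 0` and with `y` on `0 ≤ m ≤ n`;
moreover `F_x ∩ E_y = {z}`. -/
theorem bracket_exists_unique {k : ℕ} (hk : 0 < k) (Λ : KGraph k)
    (hstar : Λ.Star) (x y : TwoSidedPath Λ) (h0 : x.obj0 = y.obj0) :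
    ∃ z : TwoSidedPath Λ,
      ((∀ m n (h : m ≤ n), n ≤ 0 → z.toFun m n h = x.toFun m n h) ∧
       (∀ m n (h : m ≤ n), 0 ≤ m → z.toFun m n h = y.toFun m n h)) ∧
      (∀ z' : TwoSidedPath Λ,
        ((∀ m n (h : m ≤ n), n ≤ 0 → z'.toFun m n h = x.toFun m n h) ∧
         (∀ m n (h : m ≤ n), 0 ≤ m → z'.toFun m n h = y.toFun m n h)) → z' = z) ∧
      Fx x ∩ Ex y = {z} :=
  bracket_exists_unique_general Λ x y h0
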